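/- arXiv:2110.14351 — 5 statements merged into one kernel-verified Lean document; each statement's English description precedes it below -/
import Mathlib

section
/- Let γ > 0 and let φ:[0,∞)→[0,∞) be given by φ(t) = ∫₀ᵗ φ'(s) ds where φ' is nonnegative and increasing. If φ' satisfies (aInc)_γ with constant L ≥ 1 (i.e., φ'(s)/s^γ ≤ L φ'(t)/t^γ for 0 < s < t), then φ satisfies (aInc)_{γ+1} with the same constant L. -/
open Set MeasureTheory

/-! Write `t = c s` with `c > 1`. Applied to `u` and `c u`, the (aInc)_γ property of `φ'`
gives `φ' u ≤ (L / c^γ) φ' (c u)` for `0 < u ≤ s`, and integrating over `[0, s]` with the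
substitution `v = c u` yields `φ s ≤ (L / c^(γ+1)) φ t`, which is (aInc)_{γ+1} at `s < t`. -/

/-- (aInc)_γ with constant `L`. -/
def AInc (γ L : ℝ) (f : ℝ → ℝ) : Prop :=
  ∀ s t : ℝ, 0 < s → s < t → f s / s ^ γ ≤ L * (f t / t ^ γ)

theorem AInc.rpow_mul_le {γ L : ℝ} {f : ℝ → ℝ} (hf : AInc γ L f) {c u : ℝ} (hc : 1 < c)
    (hu : 0 < u) : c ^ γ * f u ≤ L * f (c * u) := by
  have hcu := hf u (c * u) hu (lt_mul_of_one_lt_left hu hc)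
  have huγ : 0 < u ^ γ := by positivity
  have hcγ : 0 < c ^ γ := Real.rpow_pos_of_pos (by linarith) γ
  rw [Real.mul_rpow (by linarith) hu.le, div_le_iff₀ huγ] at hcu
  calc c ^ γ * f u ≤ c ^ γ * (L * (f (c * u) / (c ^ γ * u ^ γ)) * u ^ γ) := by gcongr
    _ = L * f (c * u) := by field_simp

theorem MonotoneOn.integral_le_div_mul_integral_of_le_mul_comp {f : ℝ → ℝ}
    (hf : MonotoneOn f (Ici 0)) {c K s : ℝ} (hc : 0 < c) (hs : 0 ≤ s)
    (h : ∀ u ∈ Ioo 0 s, f u ≤ K * f (c * u)) :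
    ∫ u in 0..s, f u ≤ K / c * ∫ u in 0..c * s, f u := by
  have hint : ∀ b, 0 ≤ b → IntervalIntegrable f volume 0 b := fun b hb =>
    (hf.mono (by rw [uIcc_of_le hb]; exact Icc_subset_Ici_self)).intervalIntegrable
  have hint_comp : IntervalIntegrable (fun u => f (c * u)) volume 0 s := by
    simpa [mul_div_cancel_left₀ s hc.ne'] using (hint (c * s) (by positivity)).comp_mul_left (c := c)
  calc ∫ u in 0..s, f u ≤ ∫ u in 0..s, K * f (c * u) :=
        intervalIntegral.integral_mono_on_of_le_Ioo hs (hint s hs) (hint_comp.const_mul K) h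
    _ = K / c * ∫ u in 0..c * s, f u := by
        rw [intervalIntegral.integral_const_mul, intervalIntegral.integral_comp_mul_left _ hc.ne',
          mul_zero, smul_eq_mul]
        ring

theorem AInc.intervalIntegral {γ L : ℝ} {f : ℝ → ℝ} (hmono : MonotoneOn f (Ici 0))
    (hf : AInc γ L f) : AInc (γ + 1) L (fun t => ∫ u in 0..t, f u) := by
  intro s t hs hst
  set c := t / s
  have hc : 1 < c := (one_lt_div hs).mpr hst
  have hcs : c * s = t := div_mul_cancel₀ t hs.ne'
  have hcγ : 0 < c ^ γ := Real.rpow_pos_of_pos (by linarith) γ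
  have hint : ∫ u in 0..s, f u ≤ L / c ^ γ / c * ∫ u in 0..t, f u := by
    rw [← hcs]
    refine hmono.integral_le_div_mul_integral_of_le_mul_comp (by linarith) hs.le fun u hu => ?_
    rw [div_mul_eq_mul_div, le_div_iff₀ hcγ, mul_comm]
    exact hf.rpow_mul_le hc hu.1
  have ht : t ^ (γ + 1) = c ^ γ * c * s ^ (γ + 1) := by
    rw [← hcs, Real.mul_rpow (by linarith) hs.le, Real.rpow_add_one (by positivity)]
  have hsγ : 0 < s ^ (γ + 1) := by positivity
  rw [div_le_iff₀ hsγ, ht]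
  calc _ ≤ _ := hint
    _ = _ := by field_simp

theorem stmt1_general (γ L : ℝ) (φ φ' : ℝ → ℝ)
    (hmono : MonotoneOn φ' (Set.Ici 0))
    (hφ : ∀ t : ℝ, 0 ≤ t → φ t = ∫ s in (0:ℝ)..t, φ' s)
    (hainc : ∀ s t : ℝ, 0 < s → s < t → φ' s / s ^ γ ≤ L * (φ' t / t ^ γ)) :
    ∀ s t : ℝ, 0 < s → s < t → φ s / s ^ (γ + 1) ≤ L * (φ t / t ^ (γ + 1)) := by
  intro s t hs hst
  rw [hφ s hs.le, hφ t (hs.trans hst).le]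
  exact AInc.intervalIntegral hmono hainc s t hs hst

/-- If `φ(t) = ∫₀ᵗ φ'` with `φ'` nonnegative and increasing, and `φ'`
satisfies (aInc)_γ with constant `L ≥ 1`, then `φ` satisfies (aInc)_{γ+1} with the
same constant `L`. -/
theorem stmt1 (γ L : ℝ) (φ φ' : ℝ → ℝ)
    (hγ : 0 < γ) (hL : 1 ≤ L)
    (hnn : ∀ s : ℝ, 0 ≤ s → 0 ≤ φ' s)
    (hmono : MonotoneOn φ' (Set.Ici 0))
    (hφ : ∀ t : ℝ, 0 ≤ t → φ t = ∫ s in (0:ℝ)..t, φ' s)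
    (hainc : ∀ s t : ℝ, 0 < s → s < t → φ' s / s ^ γ ≤ L * (φ' t / t ^ γ)) :
    ∀ s t : ℝ, 0 < s → s < t → φ s / s ^ (γ + 1) ≤ L * (φ t / t ^ (γ + 1)) :=
  stmt1_general γ L φ φ' hmono hφ hainc
end

section
/- Let φ ∈ C¹([0,∞)) be a convex Φ-function whose derivative φ' satisfies (Inc)_{p−1} and (Dec)_{q−1} for some 1 < p ≤ q. Then for every κ ∈ (0,∞) and all vectors x, y ∈ ℝ^N, φ(|x−y|) ≤ C ( κ [φ(|x|) + φ(|y|)] + κ^{-1} (φ'(|x|+|y|)/(|x|+|y|)) |x−y|² ), where C depends only on p and q. -/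
open Set

/-!
Two facts about `φ` drive the estimate. Convexity with `φ 0 = 0` gives `φ t ≤ t φ'(t)`, and
`(Dec)_{q-1}` gives `φ'(2s) ≤ 2^{q-1} φ'(s)`, hence the `Δ₂` bounds `s φ'(s) ≤ 2^q φ(s)` and
`φ(a + b) ≤ 4^q (φ a + φ b)`. With `s = |x| + |y| ≥ t = |x - y|` and `φ'` increasing,
`φ(t)² ≤ (t φ'(s))² = (φ'(s)/s · t²) · s φ'(s) ≤ 8^q (φ|x| + φ|y|) · φ'(s)/s · t²`,
and the weighted AM-GM inequality `2 √(AB) ≤ κ A + κ⁻¹ B` finishes the proof with `C = 8^q`.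
-/

theorem ConvexOn.add_mul_sub_le_of_hasDerivAt {S : Set ℝ} {f : ℝ → ℝ} {f' u v : ℝ}
    (hfc : ConvexOn ℝ S f) (hu : u ∈ S) (hv : v ∈ S) (hf : HasDerivAt f f' u) :
    f u + f' * (v - u) ≤ f v := by
  rcases lt_trichotomy u v with h | rfl | h
  · have := hfc.le_slope_of_hasDerivAt hu hv h hf
    rw [slope_def_field, le_div_iff₀ (sub_pos.2 h)] at this
    linarith
  · simp
  · have := hfc.slope_le_of_hasDerivAt hv hu h hf
    rw [slope_def_field, div_le_iff₀ (sub_pos.2 h)] at this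
    linarith

theorem le_mul_mul_add_inv_mul_of_sq_le {X A B K κ : ℝ} (hA : 0 ≤ A) (hB : 0 ≤ B) (hκ : 0 < κ)
    (hK : 1 ≤ K) (h : X ^ 2 ≤ K * A * B) : X ≤ K * (κ * A + κ⁻¹ * B) := by
  have hAB : 4 * (A * B) ≤ (κ * A + κ⁻¹ * B) ^ 2 := by
    calc 4 * (A * B) = 4 * (κ * A) * (κ⁻¹ * B) := by field_simp
      _ ≤ _ := four_mul_le_sq_add _ _
  refine le_of_sq_le_sq ?_ (by positivity)
  calc X ^ 2 ≤ K * A * B := h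
    _ ≤ K ^ 2 * (4 * (A * B)) := by nlinarith [mul_nonneg hA hB]
    _ ≤ (K * (κ * A + κ⁻¹ * B)) ^ 2 := by rw [mul_pow]; gcongr

namespace PhiFunction

variable {φ φ' : ℝ → ℝ}

theorem apply_le_mul_deriv (hd : ∀ t, HasDerivAt φ (φ' t) t) (hc : ConvexOn ℝ (Ici 0) φ)
    (h0 : φ 0 = 0) {u : ℝ} (hu : 0 ≤ u) : φ u ≤ u * φ' u := by
  have := hc.add_mul_sub_le_of_hasDerivAt hu (le_refl (0 : ℝ)) (hd u)
  rw [h0] at this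
  linarith

theorem deriv_nonneg (hd : ∀ t, HasDerivAt φ (φ' t) t) (hc : ConvexOn ℝ (Ici 0) φ)
    (h0 : φ 0 = 0) (hnn : ∀ t, 0 ≤ t → 0 ≤ φ t) {u : ℝ} (hu : 0 < u) : 0 ≤ φ' u :=
  nonneg_of_mul_nonneg_right ((hnn u hu.le).trans (apply_le_mul_deriv hd hc h0 hu.le)) hu

theorem monotoneOn_deriv (hd : ∀ t, HasDerivAt φ (φ' t) t) (hc : ConvexOn ℝ (Ici 0) φ) :
    MonotoneOn φ' (Ici 0) := by
  have hderiv : deriv φ = φ' := funext fun t => (hd t).deriv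
  exact hderiv ▸ hc.monotoneOn_deriv fun t _ => (hd t).differentiableAt

theorem monotoneOn (hd : ∀ t, HasDerivAt φ (φ' t) t) (hc : ConvexOn ℝ (Ici 0) φ)
    (h0 : φ 0 = 0) (hnn : ∀ t, 0 ≤ t → 0 ≤ φ t) : MonotoneOn φ (Ici 0) := by
  refine monotoneOn_of_deriv_nonneg (convex_Ici 0)
    (fun t _ => (hd t).continuousAt.continuousWithinAt)
    (fun t _ => (hd t).differentiableAt.differentiableWithinAt) fun t ht => ?_
  rw [interior_Ici] at ht
  exact (hd t).deriv ▸ deriv_nonneg hd hc h0 hnn ht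

theorem deriv_two_mul_le {q : ℝ}
    (hdec : ∀ s t : ℝ, 0 < s → s ≤ t → φ' t / t ^ (q - 1) ≤ φ' s / s ^ (q - 1))
    {s : ℝ} (hs : 0 < s) : φ' (2 * s) ≤ 2 ^ (q - 1) * φ' s := by
  have h := hdec s (2 * s) hs (by linarith)
  have hsq : 0 < s ^ (q - 1) := Real.rpow_pos_of_pos hs _
  rw [Real.mul_rpow zero_le_two hs.le, div_le_div_iff₀ (by positivity) hsq] at h
  nlinarith

theorem mul_deriv_le (hd : ∀ t, HasDerivAt φ (φ' t) t) (hc : ConvexOn ℝ (Ici 0) φ)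
    (hnn : ∀ t, 0 ≤ t → 0 ≤ φ t) {q : ℝ}
    (hdec : ∀ s t : ℝ, 0 < s → s ≤ t → φ' t / t ^ (q - 1) ≤ φ' s / s ^ (q - 1))
    {s : ℝ} (hs : 0 < s) : s * φ' s ≤ 2 ^ q * φ s := by
  have hs2 : 0 < s / 2 := half_pos hs
  have hderiv : φ' s ≤ 2 ^ (q - 1) * φ' (s / 2) := by
    simpa only [mul_div_cancel₀ s two_ne_zero] using deriv_two_mul_le hdec hs2
  have htangent : s / 2 * φ' (s / 2) ≤ φ s := by
    have := hc.add_mul_sub_le_of_hasDerivAt hs2.le hs.le (hd (s / 2))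
    nlinarith [hnn (s / 2) hs2.le]
  calc s * φ' s ≤ s * (2 ^ (q - 1) * φ' (s / 2)) := by gcongr
    _ = 2 ^ q * (s / 2 * φ' (s / 2)) := by rw [Real.rpow_sub_one two_ne_zero]; ring
    _ ≤ 2 ^ q * φ s := by gcongr

theorem apply_two_mul_le (hd : ∀ t, HasDerivAt φ (φ' t) t) (hc : ConvexOn ℝ (Ici 0) φ)
    (h0 : φ 0 = 0) (hnn : ∀ t, 0 ≤ t → 0 ≤ φ t) {q : ℝ}
    (hdec : ∀ s t : ℝ, 0 < s → s ≤ t → φ' t / t ^ (q - 1) ≤ φ' s / s ^ (q - 1))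
    {s : ℝ} (hs : 0 ≤ s) : φ (2 * s) ≤ 4 ^ q * φ s := by
  rcases hs.eq_or_lt with rfl | hs
  · simp [h0]
  have h4q : (4 : ℝ) ^ q = 2 ^ q * 2 ^ q := by
    rw [← Real.mul_rpow zero_le_two zero_le_two]; norm_num
  calc φ (2 * s) ≤ 2 * s * φ' (2 * s) := apply_le_mul_deriv hd hc h0 (by positivity)
    _ ≤ 2 * s * (2 ^ (q - 1) * φ' s) := by gcongr; exact deriv_two_mul_le hdec hs
    _ = 2 ^ q * (s * φ' s) := by rw [Real.rpow_sub_one two_ne_zero]; ring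
    _ ≤ 2 ^ q * (2 ^ q * φ s) := by gcongr _ * ?_; exact mul_deriv_le hd hc hnn hdec hs
    _ = 4 ^ q * φ s := by rw [h4q]; ring

theorem apply_add_le (hd : ∀ t, HasDerivAt φ (φ' t) t) (hc : ConvexOn ℝ (Ici 0) φ)
    (h0 : φ 0 = 0) (hnn : ∀ t, 0 ≤ t → 0 ≤ φ t) {q : ℝ}
    (hdec : ∀ s t : ℝ, 0 < s → s ≤ t → φ' t / t ^ (q - 1) ≤ φ' s / s ^ (q - 1))
    {a b : ℝ} (ha : 0 ≤ a) (hb : 0 ≤ b) : φ (a + b) ≤ 4 ^ q * (φ a + φ b) := by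
  have hm : 0 ≤ max a b := le_max_of_le_left ha
  have hφm : φ (max a b) ≤ φ a + φ b := by
    rcases le_total a b with h | h
    · rw [max_eq_right h]; linarith [hnn a ha]
    · rw [max_eq_left h]; linarith [hnn b hb]
  calc φ (a + b) ≤ φ (2 * max a b) :=
        monotoneOn hd hc h0 hnn (add_nonneg ha hb) (mul_nonneg zero_le_two hm)
          (by linarith [le_max_left a b, le_max_right a b])
    _ ≤ 4 ^ q * φ (max a b) := apply_two_mul_le hd hc h0 hnn hdec hm
    _ ≤ 4 ^ q * (φ a + φ b) := by gcongr

theorem sq_apply_le (hd : ∀ t, HasDerivAt φ (φ' t) t) (hc : ConvexOn ℝ (Ici 0) φ)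
    (h0 : φ 0 = 0) (hnn : ∀ t, 0 ≤ t → 0 ≤ φ t) {q : ℝ}
    (hdec : ∀ s t : ℝ, 0 < s → s ≤ t → φ' t / t ^ (q - 1) ≤ φ' s / s ^ (q - 1))
    {a b t : ℝ} (ha : 0 ≤ a) (hb : 0 ≤ b) (hab : 0 < a + b) (ht : 0 ≤ t) (hta : t ≤ a + b) :
    φ t ^ 2 ≤ 8 ^ q * (φ a + φ b) * (φ' (a + b) / (a + b) * t ^ 2) := by
  have h8q : (8 : ℝ) ^ q = 2 ^ q * 4 ^ q := by
    rw [← Real.mul_rpow zero_le_two zero_le_four]; norm_num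
  have hφ't : t * φ' t ≤ t * φ' (a + b) := by
    gcongr; exact monotoneOn_deriv hd hc ht (ht.trans hta) hta
  calc φ t ^ 2 ≤ (t * φ' (a + b)) ^ 2 := by
        gcongr
        · exact hnn t ht
        · exact (apply_le_mul_deriv hd hc h0 ht).trans hφ't
    _ = φ' (a + b) / (a + b) * t ^ 2 * ((a + b) * φ' (a + b)) := by field_simp
    _ ≤ φ' (a + b) / (a + b) * t ^ 2 * (2 ^ q * (4 ^ q * (φ a + φ b))) := by
        have := deriv_nonneg hd hc h0 hnn hab
        gcongr _ * ?_
        calc (a + b) * φ' (a + b) ≤ 2 ^ q * φ (a + b) := mul_deriv_le hd hc hnn hdec hab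
          _ ≤ 2 ^ q * (4 ^ q * (φ a + φ b)) := by
            gcongr; exact apply_add_le hd hc h0 hnn hdec ha hb
    _ = 8 ^ q * (φ a + φ b) * (φ' (a + b) / (a + b) * t ^ 2) := by rw [h8q]; ring

theorem apply_le_of_le_add (hd : ∀ t, HasDerivAt φ (φ' t) t) (hc : ConvexOn ℝ (Ici 0) φ)
    (h0 : φ 0 = 0) (hnn : ∀ t, 0 ≤ t → 0 ≤ φ t) {q : ℝ} (hq : 0 ≤ q)
    (hdec : ∀ s t : ℝ, 0 < s → s ≤ t → φ' t / t ^ (q - 1) ≤ φ' s / s ^ (q - 1))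
    {κ : ℝ} (hκ : 0 < κ) {a b t : ℝ} (ha : 0 ≤ a) (hb : 0 ≤ b) (ht : 0 ≤ t) (hta : t ≤ a + b) :
    φ t ≤ 8 ^ q * (κ * (φ a + φ b) + κ⁻¹ * (φ' (a + b) / (a + b)) * t ^ 2) := by
  rcases (add_nonneg ha hb).eq_or_lt with hab | hab
  · obtain ⟨rfl, rfl, rfl⟩ : a = 0 ∧ b = 0 ∧ t = 0 := ⟨by linarith, by linarith, by linarith⟩
    simp [h0]
  rw [mul_assoc κ⁻¹]
  exact le_mul_mul_add_inv_mul_of_sq_le (add_nonneg (hnn a ha) (hnn b hb))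
    (mul_nonneg (div_nonneg (deriv_nonneg hd hc h0 hnn hab) hab.le) (sq_nonneg t)) hκ
    (Real.one_le_rpow (by norm_num) hq) (sq_apply_le hd hc h0 hnn hdec ha hb hab ht hta)

end PhiFunction

/-- For a `C¹` convex Φ-function `φ` whose derivative `φ'` satisfies
(Inc)_{p−1} and (Dec)_{q−1}, `1 < p ≤ q`, there is `C = C(p,q) > 0` such that for
every `κ > 0` and all `x, y ∈ ℝ^N`:
`φ(|x−y|) ≤ C (κ [φ(|x|) + φ(|y|)] + κ⁻¹ (φ'(|x|+|y|)/(|x|+|y|)) |x−y|²)`. -/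
theorem stmt5 (p q : ℝ) (hp : 1 < p) (hpq : p ≤ q) :
    ∃ C : ℝ, 0 < C ∧
      ∀ (N : ℕ) (φ φ' : ℝ → ℝ),
        (∀ t : ℝ, HasDerivAt φ (φ' t) t) →
        φ 0 = 0 →
        ConvexOn ℝ (Set.Ici 0) φ →
        (∀ t : ℝ, 0 ≤ t → 0 ≤ φ t) →
        (∀ s t : ℝ, 0 < s → s ≤ t → φ' s / s ^ (p - 1) ≤ φ' t / t ^ (p - 1)) →
        (∀ s t : ℝ, 0 < s → s ≤ t → φ' t / t ^ (q - 1) ≤ φ' s / s ^ (q - 1)) →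
        ∀ κ : ℝ, 0 < κ → ∀ x y : EuclideanSpace ℝ (Fin N),
          φ ‖x - y‖ ≤ C * (κ * (φ ‖x‖ + φ ‖y‖) +
            κ⁻¹ * (φ' (‖x‖ + ‖y‖) / (‖x‖ + ‖y‖)) * ‖x - y‖ ^ 2) := by
  refine ⟨8 ^ q, by positivity, fun N φ φ' hd h0 hc hnn _ hdec κ hκ x y => ?_⟩
  exact PhiFunction.apply_le_of_le_add hd hc h0 hnn (by linarith) hdec hκ (norm_nonneg x)
    (norm_nonneg y) (norm_nonneg _) (norm_sub_le x y)
end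

section
/- Let φ: Ω × [0,∞) → [0,∞) be a generalized Φ-function such that t ↦ φ(x,t) is continuous and increasing for each x, and let ω:[0,1]→[0,1] with ω(r) ≤ 1. Fix a ball B_r and suppose there exists L ≥ 1 such that |φ(x,t) − φ(y,t)| ≤ L ω(r) φ(y,t) whenever x,y ∈ B_r ∩ Ω and φ(y,t) ∈ [ω(r), |B_r|^{-1}]. Then |φ(x,t) − φ(y,t)| ≤ (L+2) ω(r) (φ(y,t) + 1) for all x,y ∈ B_r ∩ Ω and all t with φ(y,t) ≤ |B_r|^{-1}. -/
open Set Filter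

/-- old (VA1) implies new (VA1). Here `S` plays the role of
`B_r ∩ Ω`, `m = |B_r|` and `ωr = ω(r)`. -/
theorem stmt9 {α : Type*} (S : Set α) (φ : α → ℝ → ℝ) (ωr m L : ℝ)
    (hω0 : 0 ≤ ωr) (hω1 : ωr ≤ 1) (hm : 0 < m) (hωm : ωr ≤ m⁻¹) (hL : 1 ≤ L)
    (hnn : ∀ x, ∀ t : ℝ, 0 ≤ t → 0 ≤ φ x t)
    (h0 : ∀ x, φ x 0 = 0)
    (hmono : ∀ x, MonotoneOn (φ x) (Set.Ici 0))
    (hcont : ∀ x, ContinuousOn (φ x) (Set.Ici 0))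
    (htop : ∀ x, Tendsto (φ x) atTop atTop)
    (hold : ∀ x ∈ S, ∀ y ∈ S, ∀ t : ℝ, 0 ≤ t →
      ωr ≤ φ y t → φ y t ≤ m⁻¹ → |φ x t - φ y t| ≤ L * ωr * φ y t) :
    ∀ x ∈ S, ∀ y ∈ S, ∀ t : ℝ, 0 ≤ t → φ y t ≤ m⁻¹ →
      |φ x t - φ y t| ≤ (L + 2) * ωr * (φ y t + 1) := by
  intro x hx y hy t ht hφm
  have hφy := hnn y t ht
  by_cases hcase : ωr ≤ φ y t
  · -- directly from the old condition
    have := hold x hx y hy t ht hcase hφm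
    have h1 : L * ωr * φ y t ≤ (L + 2) * ωr * (φ y t + 1) := by nlinarith
    linarith
  · push_neg at hcase
    have hω0' : 0 < ωr := lt_of_le_of_lt hφy hcase
    -- find s' ≥ t with φ y s' ≥ ωr
    obtain ⟨s', hs1, hs2⟩ :=
      (((htop y).eventually_ge_atTop ωr).and (eventually_ge_atTop t)).exists
    have hIcc : Icc t s' ⊆ Ici 0 := fun u hu => le_trans ht hu.1
    obtain ⟨s, hsmem, hs⟩ := intermediate_value_Icc hs2 ((hcont y).mono hIcc)
      ⟨le_of_lt hcase, hs1⟩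
    have hs0 : (0:ℝ) ≤ s := le_trans ht hsmem.1
    -- old condition at s
    have hold' := hold x hx y hy s hs0 (le_of_eq hs.symm) (hs ▸ hωm)
    rw [hs] at hold'
    have hφxs : φ x s ≤ (L + 1) * ωr := by
      have := abs_le.1 hold'
      nlinarith
    have hφxt : φ x t ≤ (L + 1) * ωr :=
      le_trans (hmono x (mem_Ici.2 ht) (mem_Ici.2 hs0) hsmem.1) hφxs
    have hφx0 := hnn x t ht
    have : |φ x t - φ y t| ≤ (L + 1) * ωr := by
      rw [abs_sub_le_iff]
      constructor <;> nlinarith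
    nlinarith
end

section
/- Let F: ℝⁿ → ℝ be C¹ on ℝⁿ and C² on ℝⁿ∖{0}, and let φ':(0,∞)→(0,∞) satisfy (Inc)_{p−1} and (Dec)_{q−1} for some 1 < p ≤ q. Suppose the Hessian satisfies D²F(ξ) η · η ≥ ν (φ'(|ξ|)/|ξ|) |η|² for all ξ ≠ 0, η ∈ ℝⁿ, with ν > 0. Then for all ξ₁, ξ₂ ∈ ℝⁿ (not both zero), F(ξ₁) − F(ξ₂) − D F(ξ₂) · (ξ₁ − ξ₂) ≥ c (φ'(|ξ₁|+|ξ₂|)/(|ξ₁|+|ξ₂|)) |ξ₁ − ξ₂|², where c > 0 depends only on ν, p, q. -/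
/-!
Along the segment `γ t = lineMap ξ₂ ξ₁ t`, the function `g t = F (γ t)` has
`g'' t = D²F(γ t) (ξ₁ - ξ₂) (ξ₁ - ξ₂) ≥ 0` except at the at most one `t` where `γ` passes
through `0`; as `g` is differentiable there too, `g'` is monotone on all of `ℝ`, and the left-hand
side `F ξ₁ - F ξ₂ - DF ξ₂ (ξ₁ - ξ₂)` is `g 1 - g 0 - g' 0`. On `[0, 1/8]` or on `[3/4, 7/8]`,
according as `|ξ₂|` or `|ξ₁|` is the larger, `|γ t| ≥ R / 4` with `R = |ξ₁| + |ξ₂|`, so there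
(Dec)_{q-1} turns the Hessian bound into `g'' ≥ ν 4^{1-q} (φ' R / R) |ξ₁ - ξ₂|²`. Thus `g'` gains
`1/8` of this bound over that interval, which still leaves at least `1/8` of `[0, 1]` after it.
-/

open Set AffineMap

theorem mul_sub_le_image_sub_of_le_hasDerivAt {g g' : ℝ → ℝ} {x y C : ℝ} (hxy : x ≤ y)
    (hg : ∀ t ∈ Icc x y, HasDerivAt g (g' t) t) (hC : ∀ t ∈ Ioo x y, C ≤ g' t) :
    C * (y - x) ≤ g y - g x :=
  (convex_Icc x y).mul_sub_le_image_sub_of_le_deriv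
    (fun t ht => (hg t ht).continuousAt.continuousWithinAt)
    (fun t ht => (hg t (interior_subset ht)).differentiableAt.differentiableWithinAt)
    (fun t ht => by
      rw [interior_Icc] at ht
      rw [(hg t (Ioo_subset_Icc_self ht)).deriv]
      exact hC t ht)
    x (left_mem_Icc.2 hxy) y (right_mem_Icc.2 hxy) hxy

theorem monotoneOn_Icc_of_hasDerivAt_nonneg {f f' f'' : ℝ → ℝ} {a b : ℝ}
    (hf : ∀ t ∈ Icc a b, HasDerivAt f (f' t) t) (hf' : ∀ t ∈ Ioo a b, HasDerivAt f' (f'' t) t)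
    (hf'' : ∀ t ∈ Ioo a b, 0 ≤ f'' t) : MonotoneOn f' (Icc a b) := by
  -- `f'` need not be continuous at `a` or `b`; convexity of `f` on `[a, b]` reaches the endpoints.
  have hderiv : EqOn (deriv f) f' (Icc a b) := fun t ht => (hf t ht).deriv
  have hmono : MonotoneOn f' (Ioo a b) :=
    monotoneOn_of_hasDerivWithinAt_nonneg (convex_Ioo a b)
      (fun t ht => (hf' t ht).continuousAt.continuousWithinAt)
      (fun t ht => (hf' t (interior_subset ht)).hasDerivWithinAt)
      (fun t ht => hf'' t (interior_subset ht))
  have hconvex : ConvexOn ℝ (Icc a b) f := by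
    refine MonotoneOn.convexOn_of_deriv (convex_Icc a b)
      (fun t ht => (hf t ht).continuousAt.continuousWithinAt)
      (fun t ht => (hf t (interior_subset ht)).differentiableAt.differentiableWithinAt) ?_
    rw [interior_Icc]
    exact hmono.congr (fun t ht => (hderiv (Ioo_subset_Icc_self ht)).symm)
  exact (hconvex.monotoneOn_deriv fun t ht => (hf t ht).differentiableAt).congr hderiv

theorem monotone_of_hasDerivAt_nonneg_of_subsingleton {f f' f'' : ℝ → ℝ} {S : Set ℝ}
    (hS : S.Subsingleton) (hf : ∀ t, HasDerivAt f (f' t) t)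
    (hf' : ∀ t ∉ S, HasDerivAt f' (f'' t) t) (hf'' : ∀ t ∉ S, 0 ≤ f'' t) : Monotone f' := by
  have hIcc : ∀ a b, a ≤ b → (∀ t ∈ Ioo a b, t ∉ S) → f' a ≤ f' b := fun a b hab hS' =>
    monotoneOn_Icc_of_hasDerivAt_nonneg (fun t _ => hf t) (fun t ht => hf' t (hS' t ht))
      (fun t ht => hf'' t (hS' t ht)) (left_mem_Icc.2 hab) (right_mem_Icc.2 hab) hab
  intro x y hxy
  by_cases h : ∃ s ∈ S, s ∈ Ioo x y
  · obtain ⟨s, hs, hxs, hsy⟩ := h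
    exact (hIcc x s hxs.le fun t ht htS => ht.2.ne (hS htS hs)).trans
      (hIcc s y hsy.le fun t ht htS => ht.1.ne' (hS htS hs))
  · push Not at h
    exact hIcc x y hxy fun t ht htS => h t htS ht

theorem mul_sub_le_image_sub_sub_mul_of_monotoneOn_deriv {g g' : ℝ → ℝ} {x b y : ℝ}
    (hg : ∀ t ∈ Icc x y, HasDerivAt g (g' t) t) (hmono : MonotoneOn g' (Icc x y))
    (hxb : x ≤ b) (hby : b ≤ y) :
    (g' b - g' x) * (y - b) ≤ g y - g x - g' x * (y - x) := by
  have hleft : g' x * (b - x) ≤ g b - g x :=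
    mul_sub_le_image_sub_of_le_hasDerivAt hxb (fun t ht => hg t ⟨ht.1, ht.2.trans hby⟩)
      fun t ht => hmono (left_mem_Icc.2 (hxb.trans hby)) ⟨ht.1.le, ht.2.le.trans hby⟩ ht.1.le
  have hright : g' b * (y - b) ≤ g y - g b :=
    mul_sub_le_image_sub_of_le_hasDerivAt hby (fun t ht => hg t ⟨hxb.trans ht.1, ht.2⟩)
      fun t ht => hmono ⟨hxb, hby⟩ ⟨hxb.trans ht.1.le, ht.2.le⟩ ht.1.le
  linarith

theorem rpow_mul_div_le_div_of_div_rpow_le {φ : ℝ → ℝ} {q κ s R : ℝ} (hq : 1 ≤ q)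
    (hκ : 0 ≤ κ) (hs : 0 < s) (hκR : κ * R ≤ s) (hsR : s ≤ R) (hφs : 0 ≤ φ s)
    (hφR : 0 ≤ φ R) (hDec : φ R / R ^ (q - 1) ≤ φ s / s ^ (q - 1)) :
    κ ^ (q - 1) * (φ R / R) ≤ φ s / s := by
  have hR : 0 < R := hs.trans_le hsR
  have hκ_le : κ ≤ s / R := by rwa [le_div_iff₀ hR]
  have hφ_ge : (s / R) ^ (q - 1) * φ R ≤ φ s := by
    rw [Real.div_rpow hs.le hR.le, div_mul_eq_mul_div, div_le_iff₀ (by positivity), mul_comm]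
    rwa [div_le_div_iff₀ (by positivity) (by positivity)] at hDec
  calc κ ^ (q - 1) * (φ R / R) ≤ (s / R) ^ (q - 1) * φ R / R := by
        rw [mul_div_assoc]
        gcongr
    _ ≤ φ s / R := by gcongr
    _ ≤ φ s / s := by gcongr

section Segment

variable {E : Type*} [NormedAddCommGroup E] [NormedSpace ℝ E]

theorem norm_lineMap_le_add_norm (ξ₂ ξ₁ : E) {t : ℝ} (ht : t ∈ Icc (0 : ℝ) 1) :
    ‖lineMap ξ₂ ξ₁ t‖ ≤ ‖ξ₁‖ + ‖ξ₂‖ := by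
  rw [lineMap_apply_module]
  refine (norm_add_le _ _).trans ?_
  rw [norm_smul, norm_smul, Real.norm_of_nonneg ht.1, Real.norm_of_nonneg (sub_nonneg.2 ht.2)]
  nlinarith [norm_nonneg ξ₁, norm_nonneg ξ₂, ht.1, ht.2]

theorem add_norm_le_four_mul_norm_lineMap {ξ₁ ξ₂ : E} (h : ‖ξ₁‖ ≤ ‖ξ₂‖) {t : ℝ} (ht0 : 0 ≤ t)
    (ht : t ≤ 1 / 4) : ‖ξ₁‖ + ‖ξ₂‖ ≤ 4 * ‖lineMap ξ₂ ξ₁ t‖ := by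
  have hdist : dist (lineMap ξ₂ ξ₁ t) ξ₂ ≤ t * (‖ξ₁‖ + ‖ξ₂‖) := by
    rw [dist_lineMap_left, Real.norm_of_nonneg ht0, add_comm]
    exact mul_le_mul_of_nonneg_left (dist_le_norm_add_norm _ _) ht0
  have := norm_sub_norm_le ξ₂ (lineMap ξ₂ ξ₁ t)
  rw [← dist_eq_norm, dist_comm] at this
  nlinarith [norm_nonneg ξ₁]

theorem exists_Icc_add_norm_le_four_mul_norm_lineMap (ξ₁ ξ₂ : E) :
    ∃ a : ℝ, 0 ≤ a ∧ a ≤ 3 / 4 ∧ ∀ t ∈ Icc a (a + 1 / 8), ‖ξ₁‖ + ‖ξ₂‖ ≤ 4 * ‖lineMap ξ₂ ξ₁ t‖ := by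
  rcases le_total ‖ξ₁‖ ‖ξ₂‖ with h | h
  · exact ⟨0, le_rfl, by norm_num, fun t ht =>
      add_norm_le_four_mul_norm_lineMap h ht.1 (by linarith [ht.2])⟩
  · refine ⟨3 / 4, by norm_num, le_rfl, fun t ht => ?_⟩
    rw [add_comm, ← sub_sub_cancel 1 t, lineMap_apply_one_sub]
    exact add_norm_le_four_mul_norm_lineMap h (by linarith [ht.2]) (by linarith [ht.1])

theorem mul_le_bregman_of_hessian_ge {F : E → ℝ} {F' : E → E →L[ℝ] ℝ}
    {F'' : E → E →L[ℝ] E →L[ℝ] ℝ} (hF : ∀ ξ, HasFDerivAt F (F' ξ) ξ)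
    (hF' : ∀ ξ, ξ ≠ 0 → HasFDerivAt F' (F'' ξ) ξ) (hconv : ∀ ξ, ξ ≠ 0 → ∀ η, 0 ≤ F'' ξ η η)
    {ξ₁ ξ₂ : E} (hne : ξ₁ ≠ ξ₂) {a b m : ℝ} (ha : 0 ≤ a) (hab : a ≤ b) (hb : b ≤ 1)
    (hm : ∀ t ∈ Icc a b, lineMap ξ₂ ξ₁ t ≠ 0 ∧ m ≤ F'' (lineMap ξ₂ ξ₁ t) (ξ₁ - ξ₂) (ξ₁ - ξ₂)) :
    m * (b - a) * (1 - b) ≤ F ξ₁ - F ξ₂ - F' ξ₂ (ξ₁ - ξ₂) := by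
  set γ : ℝ → E := fun t => lineMap ξ₂ ξ₁ t
  set v := ξ₁ - ξ₂
  have hγ : ∀ t, HasDerivAt γ v t := fun t => hasDerivAt_lineMap
  have hg : ∀ t, HasDerivAt (fun t => F (γ t)) (F' (γ t) v) t := fun t =>
    (hF _).comp_hasDerivAt t (hγ t)
  have hg' : ∀ t, γ t ≠ 0 → HasDerivAt (fun t => F' (γ t) v) (F'' (γ t) v v) t := fun t ht => by
    simpa using ((hF' _ ht).comp_hasDerivAt t (hγ t)).clm_apply (hasDerivAt_const t v)
  have hS : {t | γ t = 0}.Subsingleton := fun s hs t ht =>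
    lineMap_injective ℝ hne.symm (hs.trans ht.symm)
  have hmono : Monotone (fun t => F' (γ t) v) :=
    monotone_of_hasDerivAt_nonneg_of_subsingleton hS hg hg' fun t ht => hconv _ ht v
  have hgrowth : m * (b - a) ≤ F' (γ b) v - F' (γ a) v :=
    mul_sub_le_image_sub_of_le_hasDerivAt hab (fun t ht => hg' t (hm t ht).1)
      fun t ht => (hm t (Ioo_subset_Icc_self ht)).2
  have h0a : F' ξ₂ v ≤ F' (γ a) v := by simpa [γ] using hmono ha
  have hbregman := mul_sub_le_image_sub_sub_mul_of_monotoneOn_deriv (fun t _ => hg t)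
    (hmono.monotoneOn _) (ha.trans hab) hb
  simp only [γ, lineMap_apply_zero, lineMap_apply_one, sub_zero, mul_one] at hbregman
  calc m * (b - a) * (1 - b) ≤ (F' (γ b) v - F' ξ₂ v) * (1 - b) :=
        mul_le_mul_of_nonneg_right (by linarith) (sub_nonneg.2 hb)
    _ ≤ F ξ₁ - F ξ₂ - F' ξ₂ (ξ₁ - ξ₂) := hbregman

end Segment

/-- Uniform convexity estimate: if the Hessian of `F` satisfies
`D²F(ξ) η·η ≥ ν (φ'(|ξ|)/|ξ|) |η|²` with `φ'` satisfying (Inc)_{p−1} and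
(Dec)_{q−1}, then `F(ξ₁) − F(ξ₂) − DF(ξ₂)·(ξ₁−ξ₂) ≥
c (φ'(|ξ₁|+|ξ₂|)/(|ξ₁|+|ξ₂|)) |ξ₁ − ξ₂|²` with `c = c(ν,p,q) > 0`. -/
theorem stmt17 (ν p q : ℝ) (hν : 0 < ν) (hp : 1 < p) (hpq : p ≤ q) :
    ∃ c : ℝ, 0 < c ∧
      ∀ (n : ℕ) (F : EuclideanSpace ℝ (Fin n) → ℝ)
        (F' : EuclideanSpace ℝ (Fin n) → (EuclideanSpace ℝ (Fin n) →L[ℝ] ℝ))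
        (F'' : EuclideanSpace ℝ (Fin n) →
          (EuclideanSpace ℝ (Fin n) →L[ℝ] EuclideanSpace ℝ (Fin n) →L[ℝ] ℝ))
        (φ' : ℝ → ℝ),
        (∀ ξ, HasFDerivAt F (F' ξ) ξ) →
        (∀ ξ, ξ ≠ 0 → HasFDerivAt F' (F'' ξ) ξ) →
        (∀ t : ℝ, 0 < t → 0 < φ' t) →
        (∀ s t : ℝ, 0 < s → s ≤ t →
          φ' s / s ^ (p - 1) ≤ φ' t / t ^ (p - 1)) →
        (∀ s t : ℝ, 0 < s → s ≤ t →
          φ' t / t ^ (q - 1) ≤ φ' s / s ^ (q - 1)) →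
        (∀ ξ, ξ ≠ 0 → ∀ η : EuclideanSpace ℝ (Fin n),
          ν * (φ' ‖ξ‖ / ‖ξ‖) * ‖η‖ ^ 2 ≤ F'' ξ η η) →
        ∀ ξ₁ ξ₂ : EuclideanSpace ℝ (Fin n), ¬(ξ₁ = 0 ∧ ξ₂ = 0) →
          c * (φ' (‖ξ₁‖ + ‖ξ₂‖) / (‖ξ₁‖ + ‖ξ₂‖)) * ‖ξ₁ - ξ₂‖ ^ 2 ≤
            F ξ₁ - F ξ₂ - F' ξ₂ (ξ₁ - ξ₂) := by
  refine ⟨ν * (1 / 4) ^ (q - 1) / 64, by positivity, ?_⟩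
  intro n F F' F'' φ' hF hF' hφ _ hDec hHess ξ₁ ξ₂ hne
  rcases eq_or_ne ξ₁ ξ₂ with rfl | hξ
  · simp
  set R := ‖ξ₁‖ + ‖ξ₂‖
  have hR : 0 < R := by
    rcases not_and_or.mp hne with h | h <;> positivity
  obtain ⟨a, ha0, ha, hgood⟩ := exists_Icc_add_norm_le_four_mul_norm_lineMap ξ₁ ξ₂
  set m := ν * ((1 / 4) ^ (q - 1) * (φ' R / R)) * ‖ξ₁ - ξ₂‖ ^ 2 with hm_def
  have hm : ∀ t ∈ Icc a (a + 1 / 8), lineMap ξ₂ ξ₁ t ≠ 0 ∧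
      m ≤ F'' (lineMap ξ₂ ξ₁ t) (ξ₁ - ξ₂) (ξ₁ - ξ₂) := by
    intro t ht
    have hpos : 0 < ‖lineMap ξ₂ ξ₁ t‖ := by linarith [hgood t ht]
    have hne0 := norm_pos_iff.mp hpos
    refine ⟨hne0, le_trans ?_ (hHess _ hne0 _)⟩
    have hle := norm_lineMap_le_add_norm ξ₂ ξ₁ (t := t) ⟨by linarith [ht.1], by linarith [ht.2]⟩
    rw [hm_def]
    gcongr
    exact rpow_mul_div_le_div_of_div_rpow_le (by linarith) (by norm_num) hpos
      (by linarith [hgood t ht]) hle (hφ _ hpos).le (hφ R hR).le (hDec _ _ hpos hle)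
  have hbregman := mul_le_bregman_of_hessian_ge hF hF'
    (fun ξ hξ η => le_trans (by have := hφ _ (norm_pos_iff.mpr hξ); positivity) (hHess ξ hξ η))
    hξ ha0 (by linarith) (by linarith) hm
  have hm0 : 0 ≤ m := by have := hφ R hR; positivity
  calc ν * (1 / 4) ^ (q - 1) / 64 * (φ' R / R) * ‖ξ₁ - ξ₂‖ ^ 2 = m * (1 / 8) * (1 / 8) := by ring
    _ ≤ m * (a + 1 / 8 - a) * (1 - (a + 1 / 8)) := by gcongr <;> linarith
    _ ≤ _ := hbregman
end

section
/- Let φ ∈ Φ_w be a weak Φ-function on a measure space that satisfies (aDec)_1 with constant L (i.e., t ↦ φ(t)/t is almost decreasing). Then there exists a concave Φ-prefunction ψ with ψ ≈ φ (with constants depending only on L), and consequently the reverse Jensen inequality holds: for every f ∈ L¹(Ω) with Ω of finite positive measure, ⨍_Ω φ(|f|) dx ≤ C φ(⨍_Ω |f| dx), with C depending only on L. -/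
/-! Since `φ t / t` is almost decreasing, for every `s > 0` the line `t ↦ φ s + L (φ s / s) t`
lies above `φ` on `[0, ∞)`. The infimum `ψ` of these lines is concave and increasing, lies above
`φ`, and the line with `s = t` gives `ψ t ≤ (1 + L) φ t`. Averaging the line with `s > 0` over
`|f|` gives `⨍ φ (|f|) ≤ ψ (⨍ |f|)`, hence the reverse Jensen inequality with `C = 1 + L`. -/

open Set Filter MeasureTheory

theorem concaveOn_ciInf {ι E : Type*} [Nonempty ι] [AddCommMonoid E] [SMul ℝ E] {s : Set E}
    {f : ι → E → ℝ} (hf : ∀ i, ConcaveOn ℝ s (f i))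
    (hbdd : ∀ x ∈ s, BddBelow (range fun i => f i x)) :
    ConcaveOn ℝ s fun x => ⨅ i, f i x := by
  refine ⟨(hf (Classical.arbitrary ι)).1, fun x hx y hy a b ha hb hab => le_ciInf fun i => ?_⟩
  calc a • (⨅ j, f j x) + b • ⨅ j, f j y ≤ a • f i x + b • f i y := by
        gcongr
        exacts [ciInf_le (hbdd x hx) i, ciInf_le (hbdd y hy) i]
    _ ≤ f i (a • x + b • y) := (hf i).2 hx hy ha hb hab

theorem monotoneOn_ciInf {ι α β : Type*} [Nonempty ι] [Preorder α] [ConditionallyCompleteLattice β]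
    {s : Set α} {f : ι → α → β} (hf : ∀ i, MonotoneOn (f i) s)
    (hbdd : ∀ x ∈ s, BddBelow (range fun i => f i x)) :
    MonotoneOn (fun x => ⨅ i, f i x) s :=
  fun _ hx _ hy hxy => le_ciInf fun i => (ciInf_le (hbdd _ hx) i).trans (hf i hx hy hxy)

theorem average_le_of_ae_le_affine {α : Type*} [MeasurableSpace α] {μ : Measure α}
    [IsFiniteMeasure μ] [NeZero μ] {g h : α → ℝ} (hg : Integrable g μ) (hh : Integrable h μ)
    {c d : ℝ} (hle : ∀ᵐ x ∂μ, g x ≤ c + d * h x) :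
    ⨍ x, g x ∂μ ≤ c + d * ⨍ x, h x ∂μ := by
  have hμ : 0 < μ.real univ := by
    simp [measureReal_def, ENNReal.toReal_pos_iff, pos_iff_ne_zero, NeZero.ne μ]
  calc ⨍ x, g x ∂μ ≤ ⨍ x, c + d * h x ∂μ := by
        simp only [average_eq, smul_eq_mul]
        gcongr ?_ * ?_
        exact integral_mono_ae hg ((integrable_const c).add (hh.const_mul d)) hle
    _ = c + d * ⨍ x, h x ∂μ := by
        simp only [average_eq, smul_eq_mul, integral_add (integrable_const c) (hh.const_mul d),
          integral_const, integral_const_mul]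
        field_simp

theorem measurable_comp_abs_of_monotoneOn {φ : ℝ → ℝ} (hφ : MonotoneOn φ (Ici 0)) :
    Measurable fun t => φ |t| := by
  have hmono : Monotone fun t => φ (max t 0) := fun a b hab =>
    hφ (le_max_right a 0) (le_max_right b 0) (max_le_max_right 0 hab)
  simpa [Function.comp_def] using hmono.measurable.comp measurable_abs

noncomputable def affineEnvelope (L : ℝ) (φ : ℝ → ℝ) (t : ℝ) : ℝ :=
  ⨅ s : Ioi (0 : ℝ), φ s + L * (φ s / s) * t

section aDec

variable {φ : ℝ → ℝ} {L : ℝ}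

theorem le_add_mul_of_aDec (hφ : ∀ t, 0 ≤ t → 0 ≤ φ t) (hmono : MonotoneOn φ (Ici 0))
    (hL : 0 ≤ L) (hDec : ∀ s t : ℝ, 0 < s → s ≤ t → φ t / t ≤ L * (φ s / s))
    {s t : ℝ} (hs : 0 ≤ s) (ht : 0 < t) : φ s ≤ φ t + L * (φ t / t) * s := by
  have hslope : 0 ≤ L * (φ t / t) * s := by have := hφ t ht.le; positivity
  rcases le_or_gt s t with hst | hts
  · linarith [hmono hs ht.le hst]
  · have hs' : 0 < s := ht.trans hts
    have := (div_le_iff₀ hs').1 (hDec t s ht hts.le)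
    linarith [hφ t ht.le]

theorem bddBelow_affineEnvelope (hφ : ∀ t, 0 ≤ t → 0 ≤ φ t) (hL : 0 ≤ L) {t : ℝ} (ht : 0 ≤ t) :
    BddBelow (range fun s : Ioi (0 : ℝ) => φ s + L * (φ s / s) * t) := by
  refine ⟨0, ?_⟩
  rintro _ ⟨⟨s, hs⟩, rfl⟩
  have := hφ s (le_of_lt hs)
  have : (0 : ℝ) < s := hs
  positivity

theorem le_affineEnvelope (hφ : ∀ t, 0 ≤ t → 0 ≤ φ t) (hmono : MonotoneOn φ (Ici 0))
    (hL : 0 ≤ L) (hDec : ∀ s t : ℝ, 0 < s → s ≤ t → φ t / t ≤ L * (φ s / s))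
    {t : ℝ} (ht : 0 ≤ t) : φ t ≤ affineEnvelope L φ t :=
  le_ciInf fun s => le_add_mul_of_aDec hφ hmono hL hDec ht s.2

theorem affineEnvelope_zero (hφ : ∀ t, 0 ≤ t → 0 ≤ φ t) (hL : 0 ≤ L)
    (hφ₀ : Tendsto φ (nhdsWithin 0 (Ioi 0)) (nhds 0)) : affineEnvelope L φ 0 = 0 := by
  refine le_antisymm (ge_of_tendsto hφ₀ (eventually_mem_nhdsWithin.mono fun s hs => ?_))
    (le_ciInf fun s => by simpa using hφ s (le_of_lt s.2))
  simpa [affineEnvelope] using ciInf_le (bddBelow_affineEnvelope hφ hL le_rfl) ⟨s, hs⟩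

theorem affineEnvelope_le (hφ : ∀ t, 0 ≤ t → 0 ≤ φ t) (hL : 0 ≤ L)
    (hφ₀ : Tendsto φ (nhdsWithin 0 (Ioi 0)) (nhds 0)) {t : ℝ} (ht : 0 ≤ t) :
    affineEnvelope L φ t ≤ (1 + L) * φ t := by
  rcases ht.eq_or_lt with rfl | ht
  · rw [affineEnvelope_zero hφ hL hφ₀]
    have := hφ 0 le_rfl
    positivity
  · calc affineEnvelope L φ t ≤ φ t + L * (φ t / t) * t :=
          ciInf_le (bddBelow_affineEnvelope hφ hL ht.le) ⟨t, ht⟩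
      _ = (1 + L) * φ t := by field_simp

theorem concaveOn_affineEnvelope (hφ : ∀ t, 0 ≤ t → 0 ≤ φ t) (hL : 0 ≤ L) :
    ConcaveOn ℝ (Ici 0) (affineEnvelope L φ) :=
  concaveOn_ciInf (fun s => (concaveOn_const _ (convex_Ici 0)).add
      ((LinearMap.mul ℝ ℝ (L * (φ s / s))).concaveOn (convex_Ici 0)))
    fun _ ht => bddBelow_affineEnvelope hφ hL ht

theorem monotoneOn_affineEnvelope (hφ : ∀ t, 0 ≤ t → 0 ≤ φ t) (hL : 0 ≤ L) :
    MonotoneOn (affineEnvelope L φ) (Ici 0) :=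
  monotoneOn_ciInf (fun s _ _ _ _ hab => by
      have := hφ s (le_of_lt s.2)
      have : (0 : ℝ) < s := s.2
      gcongr)
    fun _ ht => bddBelow_affineEnvelope hφ hL ht

variable {α : Type*} [MeasurableSpace α] {μ : Measure α} [IsFiniteMeasure μ] {f : α → ℝ}

theorem integrable_comp_abs_of_aDec (hφ : ∀ t, 0 ≤ t → 0 ≤ φ t) (hmono : MonotoneOn φ (Ici 0))
    (hL : 0 ≤ L) (hDec : ∀ s t : ℝ, 0 < s → s ≤ t → φ t / t ≤ L * (φ s / s))
    (hf : Integrable f μ) : Integrable (fun x => φ |f x|) μ :=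
  ((integrable_const (φ 1)).add (hf.abs.const_mul (L * (φ 1 / 1)))).mono'
    ((measurable_comp_abs_of_monotoneOn hmono).comp_aemeasurable
      hf.aemeasurable).aestronglyMeasurable
    (ae_of_all _ fun x => by
      rw [Real.norm_of_nonneg (hφ _ (abs_nonneg _))]
      exact le_add_mul_of_aDec hφ hmono hL hDec (abs_nonneg _) one_pos)

theorem average_comp_abs_le_affineEnvelope [NeZero μ] (hφ : ∀ t, 0 ≤ t → 0 ≤ φ t)
    (hmono : MonotoneOn φ (Ici 0)) (hL : 0 ≤ L)
    (hDec : ∀ s t : ℝ, 0 < s → s ≤ t → φ t / t ≤ L * (φ s / s)) (hf : Integrable f μ) :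
    ⨍ x, φ |f x| ∂μ ≤ affineEnvelope L φ (⨍ x, |f x| ∂μ) :=
  le_ciInf fun s => average_le_of_ae_le_affine (integrable_comp_abs_of_aDec hφ hmono hL hDec hf)
    hf.abs (ae_of_all _ fun _ => le_add_mul_of_aDec hφ hmono hL hDec (abs_nonneg _) s.2)

end aDec

/-- A weak Φ-function satisfying (aDec)_1 with constant `L` is
equivalent to a concave Φ-prefunction, and consequently the reverse Jensen
inequality holds, with constants depending only on `L`. -/
theorem stmt18 (L : ℝ) (hL : 1 ≤ L) :
    ∃ C : ℝ, 1 ≤ C ∧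
      ∀ φ : ℝ → ℝ,
        (∀ t : ℝ, 0 ≤ t → 0 ≤ φ t) →
        MonotoneOn φ (Set.Ici 0) →
        φ 0 = 0 →
        Tendsto φ (nhdsWithin 0 (Set.Ioi 0)) (nhds 0) →
        Tendsto φ atTop atTop →
        (∃ L₁ : ℝ, 1 ≤ L₁ ∧
          ∀ s t : ℝ, 0 < s → s ≤ t → φ s / s ≤ L₁ * (φ t / t)) →
        (∀ s t : ℝ, 0 < s → s ≤ t → φ t / t ≤ L * (φ s / s)) →
        (∃ ψ : ℝ → ℝ, ConcaveOn ℝ (Set.Ici 0) ψ ∧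
            MonotoneOn ψ (Set.Ici 0) ∧ ψ 0 = 0 ∧
            Tendsto ψ (nhdsWithin 0 (Set.Ioi 0)) (nhds 0) ∧
            Tendsto ψ atTop atTop ∧
            (∀ t : ℝ, 0 ≤ t → C⁻¹ * ψ t ≤ φ t ∧ φ t ≤ C * ψ t)) ∧
          ∀ (α : Type) [inst : MeasurableSpace α] (μ : Measure α),
            0 < μ Set.univ → μ Set.univ < ⊤ →
            ∀ f : α → ℝ, Integrable f μ →
              (⨍ x, φ |f x| ∂μ) ≤ C * φ (⨍ x, |f x| ∂μ) := by
  have hL₀ : 0 ≤ L := by linarith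
  refine ⟨1 + L, by linarith, fun φ hφ hmono _ hφ₀ hφtop _ hDec => ?_⟩
  have hφψ : ∀ t, 0 ≤ t → φ t ≤ affineEnvelope L φ t := fun _ =>
    le_affineEnvelope hφ hmono hL₀ hDec
  have hψφ : ∀ t, 0 ≤ t → affineEnvelope L φ t ≤ (1 + L) * φ t := fun _ =>
    affineEnvelope_le hφ hL₀ hφ₀
  refine ⟨⟨affineEnvelope L φ, concaveOn_affineEnvelope hφ hL₀, monotoneOn_affineEnvelope hφ hL₀,
    affineEnvelope_zero hφ hL₀ hφ₀, ?_,
    tendsto_atTop_mono' _ ((eventually_ge_atTop 0).mono hφψ) hφtop, fun t ht => ⟨?_, ?_⟩⟩, ?_⟩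
  · refine tendsto_of_tendsto_of_tendsto_of_le_of_le' tendsto_const_nhds
      (by simpa using hφ₀.const_mul (1 + L)) ?_ ?_ <;>
      filter_upwards [self_mem_nhdsWithin] with t (ht : 0 < t)
    exacts [(hφ t ht.le).trans (hφψ t ht.le), hψφ t ht.le]
  · rw [inv_mul_le_iff₀ (by positivity)]
    exact hψφ t ht
  · exact (hφψ t ht).trans (le_mul_of_one_le_left ((hφ t ht).trans (hφψ t ht)) (by linarith))
  · intro α _ μ hμ hμ_fin f hf
    have : IsFiniteMeasure μ := ⟨hμ_fin⟩
    have : NeZero μ := ⟨Measure.measure_univ_ne_zero.1 hμ.ne'⟩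
    exact (average_comp_abs_le_affineEnvelope hφ hmono hL₀ hDec hf).trans
      (hψφ _ (by rw [average_eq]; positivity))
end
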